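/- arXiv:2605.01936 — 6 statements merged into one kernel-verified Lean document; each statement's English description precedes it below -/
import Mathlib

section
/- Define h(a,b) := 1(a > b) + (1/2)·1(a = b) for real a, b. Let c_i, c_j > 0, let π_i, π_j > 0, and set τ := c_i / c_j and r* := π_i / π_j. Then for every r > 0: π_i c_j h(τ, r) + π_j c_i h(r, τ) ≥ π_i c_j h(τ, r*) + π_j c_i h(r*, τ). That is, pointwise in the realized costs, the threshold rule at the true odds ratio r* minimizes the expected pairwise search cost. -/
/-- `hfun a b = 1(a > b) + (1/2)·1(a = b)`: the probability that the first
quantity beats the second, with uniform tie-breaking. -/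
noncomputable def hfun (a b : ℝ) : ℝ :=
  (if b < a then 1 else 0) + (1 / 2) * (if a = b then 1 else 0)

lemma hfun_nonneg (a b : ℝ) : 0 ≤ hfun a b := by
  unfold hfun; split_ifs <;> norm_num

lemma hfun_sum (a b : ℝ) : hfun a b + hfun b a = 1 := by
  unfold hfun
  rcases lt_trichotomy a b with h | h | h
  · simp [h, not_lt.2 h.le, h.ne, h.ne']
  · simp [h, lt_irrefl]; norm_num
  · simp [h, not_lt.2 h.le, h.ne, h.ne']

lemma hfun_min (x y : ℝ) : x * hfun y x + y * hfun x y = min x y := by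
  unfold hfun
  rcases lt_trichotomy x y with h | h | h
  · simp [h, not_lt.2 h.le, h.ne, h.ne', min_eq_left h.le]
  · subst h; simp [lt_irrefl]; ring
  · simp [h, not_lt.2 h.le, h.ne, h.ne', min_eq_right h.le]

/-- **Pointwise optimality of the true-odds threshold.** For realized costs
`ci, cj > 0` and true class weights `pii, pij > 0`, with `τ = ci / cj` and
`r* = pii / pij`, the pairwise Bayes cost
`pii · cj · h(τ, r) + pij · ci · h(r, τ)` is minimized over `r > 0` at `r = r*`. -/
theorem pairwise_threshold_optimal (ci cj pii pij : ℝ) (hci : 0 < ci) (hcj : 0 < cj)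
    (hpii : 0 < pii) (hpij : 0 < pij) (r : ℝ) (hr : 0 < r) :
    pii * cj * hfun (ci / cj) (pii / pij) + pij * ci * hfun (pii / pij) (ci / cj)
      ≤ pii * cj * hfun (ci / cj) r + pij * ci * hfun r (ci / cj) := by
  set τ := ci / cj with hτ
  set s := pii / pij with hs
  have hτpos : 0 < τ := div_pos hci hcj
  have hspos : 0 < s := div_pos hpii hpij
  have hci' : ci = τ * cj := by rw [hτ, div_mul_cancel₀ ci hcj.ne']
  have hpii' : pii = s * pij := by rw [hs, div_mul_cancel₀ pii hpij.ne']
  have hmin := hfun_min s τ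
  have hsum := hfun_sum τ r
  have h1 := hfun_nonneg τ r
  have h2 := hfun_nonneg r τ
  have hminle : min s τ ≤ s * hfun τ r + τ * hfun r τ := by
    rcases min_le_iff.mpr (Or.inl (le_refl s)) with _
    have : min s τ * (hfun τ r + hfun r τ) ≤ s * hfun τ r + τ * hfun r τ := by
      have hms : min s τ ≤ s := min_le_left _ _
      have hmt : min s τ ≤ τ := min_le_right _ _
      nlinarith
    rwa [hsum, mul_one] at this
  calc pii * cj * hfun τ s + pij * ci * hfun s τ
      = pij * cj * (s * hfun τ s + τ * hfun s τ) := by rw [hci', hpii']; ring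
    _ = pij * cj * min s τ := by rw [hfun_min]
    _ ≤ pij * cj * (s * hfun τ r + τ * hfun r τ) := by
        apply mul_le_mul_of_nonneg_left hminle (by positivity)
    _ = pii * cj * hfun τ r + pij * ci * hfun r τ := by rw [hci', hpii']; ring
end

section
/- Let α > 0 and let u_i, u_j be independent random variables with density α x^{α-1} on (0,1) (the Beta(α,1) distribution). Define b_α := α²/((α+1)(2α+1)) and define L_α(r) := 1 + (1 + 1/α)(1 - r^α) for 0 < r ≤ 1 and L_α(r) := r^{-(α+1)} for r > 1. Then for every r > 0, E[u_j · 1(u_j < u_i / r)] = b_α · L_α(r). -/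
open MeasureTheory

/-- The `Beta(α, 1)` distribution on `ℝ`: density `α x^(α-1)` on `(0, 1)`. -/
noncomputable def betaMeasure (α : ℝ) : Measure ℝ :=
  volume.withDensity
    (fun x => ENNReal.ofReal (if x ∈ Set.Ioo (0 : ℝ) 1 then α * x ^ (α - 1) else 0))

/-- The normalized Beta-family pairwise loss:
`L_α(r) = 1 + (1 + 1/α)(1 - r^α)` for `r ≤ 1` and `r^{-(α+1)}` for `r > 1`. -/
noncomputable def Lbeta (α r : ℝ) : ℝ :=
  if r ≤ 1 then 1 + (1 + 1 / α) * (1 - r ^ α) else r ^ (-(α + 1))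

namespace BetaAux

noncomputable def den (α : ℝ) (x : ℝ) : ℝ :=
  if x ∈ Set.Ioo (0 : ℝ) 1 then α * x ^ (α - 1) else 0

lemma den_nonneg {α : ℝ} (hα : 0 < α) (x : ℝ) : 0 ≤ den α x := by
  unfold den
  split_ifs with h
  · exact mul_nonneg hα.le (Real.rpow_nonneg h.1.le _)
  · exact le_rfl

lemma den_measurable {α : ℝ} : Measurable (den α) := by
  unfold den
  exact Measurable.ite measurableSet_Ioo (by fun_prop) measurable_const

lemma betaMeasure_eq (α : ℝ) :
    betaMeasure α = volume.withDensity (fun x => ENNReal.ofReal (den α x)) := rfl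

lemma integral_betaMeasure {α : ℝ} (hα : 0 < α) (g : ℝ → ℝ) :
    ∫ x, g x ∂(betaMeasure α) = ∫ x in Set.Ioo (0:ℝ) 1, α * x ^ (α - 1) * g x := by
  rw [betaMeasure_eq]
  have hd : Measurable fun x => (den α x).toNNReal :=
    den_measurable.real_toNNReal
  have : (fun x => ENNReal.ofReal (den α x))
      = fun x => ((den α x).toNNReal : ENNReal) := rfl
  rw [this, integral_withDensity_eq_integral_smul hd]
  rw [← integral_indicator measurableSet_Ioo]
  congr 1
  ext x
  rw [NNReal.smul_def, Real.coe_toNNReal _ (den_nonneg hα x)]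
  unfold den
  by_cases h : x ∈ Set.Ioo (0:ℝ) 1 <;> simp [Set.indicator, h]

lemma ae_mem {α : ℝ} : ∀ᵐ x ∂(betaMeasure α), x ∈ Set.Ioo (0:ℝ) 1 := by
  rw [ae_iff]
  have h1 : {x : ℝ | ¬ x ∈ Set.Ioo (0:ℝ) 1} = (Set.Ioo (0:ℝ) 1)ᶜ := rfl
  rw [h1, betaMeasure_eq, withDensity_apply _ measurableSet_Ioo.compl]
  calc ∫⁻ x in (Set.Ioo (0:ℝ) 1)ᶜ, ENNReal.ofReal (den α x)
      = ∫⁻ _ in (Set.Ioo (0:ℝ) 1)ᶜ, 0 := by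
        refine setLIntegral_congr_fun measurableSet_Ioo.compl (fun x hx => ?_)
        unfold den
        rw [if_neg hx]
        simp
    _ = 0 := by simp

lemma setIntegral_Ioo_rpow {p : ℝ} (hp : -1 < p) {a b : ℝ} (hab : a ≤ b) :
    ∫ x in Set.Ioo a b, x ^ p = (b ^ (p+1) - a ^ (p+1)) / (p+1) := by
  rw [← MeasureTheory.integral_Ioc_eq_integral_Ioo, ← intervalIntegral.integral_of_le hab,
    integral_rpow (Or.inl hp)]

lemma den_integrable {α : ℝ} (hα : 0 < α) : Integrable (den α) := by
  have h1 : IntervalIntegrable (fun x : ℝ => x ^ (α - 1)) volume 0 1 :=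
    intervalIntegral.intervalIntegrable_rpow' (by linarith)
  rw [intervalIntegrable_iff_integrableOn_Ioc_of_le (by norm_num)] at h1
  have h2 : IntegrableOn (fun x : ℝ => α * x ^ (α - 1)) (Set.Ioo 0 1) :=
    (h1.mono_set Set.Ioo_subset_Ioc_self).const_mul α
  have : den α = (Set.Ioo (0:ℝ) 1).indicator (fun x => α * x ^ (α - 1)) := by
    ext x; unfold den; by_cases h : x ∈ Set.Ioo (0:ℝ) 1 <;> simp [Set.indicator, h]
  rw [this, integrable_indicator_iff measurableSet_Ioo]
  exact h2

lemma isProb {α : ℝ} (hα : 0 < α) : IsProbabilityMeasure (betaMeasure α) := by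
  constructor
  rw [betaMeasure_eq, withDensity_apply _ MeasurableSet.univ, Measure.restrict_univ]
  rw [← ofReal_integral_eq_lintegral_ofReal (den_integrable hα)
    (ae_of_all _ (den_nonneg hα))]
  have : ∫ x, den α x = ∫ x in Set.Ioo (0:ℝ) 1, α * x ^ (α - 1) := by
    rw [← integral_indicator measurableSet_Ioo]
    congr 1; ext x; unfold den
    by_cases h : x ∈ Set.Ioo (0:ℝ) 1 <;> simp [Set.indicator, h]
  rw [this, MeasureTheory.integral_const_mul, setIntegral_Ioo_rpow (by linarith) (by norm_num)]
  rw [show α - 1 + 1 = α by ring, Real.one_rpow, Real.zero_rpow hα.ne']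
  rw [show (1 - 0 : ℝ) / α = 1 / α by ring]
  rw [mul_one_div, div_self hα.ne']
  simp

lemma inner_eval {α : ℝ} (hα : 0 < α) {c : ℝ} (hc : 0 < c) :
    ∫ y in Set.Ioo (0:ℝ) 1, α * y ^ (α - 1) * (y * if y < c then 1 else 0)
      = α / (α + 1) * (min 1 c) ^ (α + 1) := by
  have hm0 : 0 < min 1 c := lt_min one_pos hc
  have key : ∀ y : ℝ, α * y ^ (α - 1) * (y * if y < c then 1 else 0)
      = (Set.Iio c).indicator (fun y => α * y ^ (α - 1) * y) y := by
    intro y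
    by_cases h : y < c <;> simp [Set.indicator, h]
  simp_rw [key]
  rw [setIntegral_indicator measurableSet_Iio, Set.Ioo_inter_Iio]
  have congr1 : ∀ y ∈ Set.Ioo (0:ℝ) (min 1 c),
      α * y ^ (α - 1) * y = α * y ^ α := by
    intro y hy
    rw [mul_assoc, ← Real.rpow_add_one hy.1.ne' (α - 1), show α - 1 + 1 = α by ring]
  rw [setIntegral_congr_fun measurableSet_Ioo congr1, MeasureTheory.integral_const_mul,
    setIntegral_Ioo_rpow (by linarith) hm0.le, Real.zero_rpow (by linarith)]
  field_simp
  ring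

end BetaAux

/-- **Beta pairwise loss.** For `α > 0` and independent `u i, u j ∼ Beta(α, 1)`,
for every `r > 0`, `E[u j · 1(u j < u i / r)] = b_α · L_α(r)` with
`b_α = α² / ((α+1)(2α+1))`. -/
theorem beta_pairwise_loss {Ω : Type*} [MeasurableSpace Ω] (μ : Measure Ω)
    [IsProbabilityMeasure μ] (α : ℝ) (hα : 0 < α) (ui uj : Ω → ℝ)
    (hui : Measurable ui) (huj : Measurable uj)
    (hindep : ProbabilityTheory.IndepFun ui uj μ)
    (hlawi : μ.map ui = betaMeasure α) (hlawj : μ.map uj = betaMeasure α)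
    (r : ℝ) (hr : 0 < r) :
    ∫ ω, uj ω * (if uj ω < ui ω / r then 1 else 0) ∂μ
      = α ^ 2 / ((α + 1) * (2 * α + 1)) * Lbeta α r := by
  classical
  set ν := betaMeasure α with hν2
  haveI : IsProbabilityMeasure ν := BetaAux.isProb hα
  have hα1 : (0:ℝ) < α + 1 := by linarith
  have h2α1 : (0:ℝ) < 2 * α + 1 := by linarith
  -- step 1: reduce to product measure
  have hmap : μ.map (fun ω => (ui ω, uj ω)) = ν.prod ν := by
    exact ((ProbabilityTheory.indepFun_iff_map_prod_eq_prod_map_map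
      hui.aemeasurable huj.aemeasurable).mp hindep).trans (by rw [hlawi, hlawj])
  have hFmeas : Measurable (fun p : ℝ × ℝ => p.2 * if p.2 < p.1 / r then 1 else 0) := by
    apply measurable_snd.mul
    exact Measurable.ite (measurableSet_lt measurable_snd (measurable_fst.div_const r))
      measurable_const measurable_const
  have step1 : ∫ ω, uj ω * (if uj ω < ui ω / r then 1 else 0) ∂μ
      = ∫ p : ℝ × ℝ, p.2 * (if p.2 < p.1 / r then 1 else 0) ∂(ν.prod ν) := by
    rw [← hmap, integral_map (hui.prodMk huj).aemeasurable hFmeas.aestronglyMeasurable]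
  rw [step1]
  -- a.e. membership in the product
  have haes : ∀ᵐ p ∂(ν.prod ν), p.2 ∈ Set.Ioo (0:ℝ) 1 := by
    rw [ae_iff]
    have h1 : {p : ℝ × ℝ | ¬ p.2 ∈ Set.Ioo (0:ℝ) 1}
        = (Set.univ : Set ℝ) ×ˢ (Set.Ioo (0:ℝ) 1)ᶜ := by
      ext p; simp
    rw [h1, Measure.prod_prod]
    have h2 : ν (Set.Ioo (0:ℝ) 1)ᶜ = 0 := by
      have := BetaAux.ae_mem (α := α)
      rw [ae_iff] at this
      exact this
    rw [h2, mul_zero]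
  -- integrability
  have hint : Integrable (fun p : ℝ × ℝ => p.2 * if p.2 < p.1 / r then 1 else 0) (ν.prod ν) := by
    refine Integrable.mono' (integrable_const 1) hFmeas.aestronglyMeasurable ?_
    filter_upwards [haes] with p hp
    have h1 : |p.2| ≤ 1 := by
      rw [abs_le]; constructor <;> [linarith [hp.1]; linarith [hp.2]]
    have h2 : |if p.2 < p.1 / r then (1:ℝ) else 0| ≤ 1 := by
      split_ifs <;> simp
    calc ‖p.2 * if p.2 < p.1 / r then (1:ℝ) else 0‖
        = |p.2| * |if p.2 < p.1 / r then (1:ℝ) else 0| := by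
          rw [Real.norm_eq_abs, abs_mul]
      _ ≤ 1 * 1 := mul_le_mul h1 h2 (abs_nonneg _) zero_le_one
      _ = 1 := by norm_num
  rw [MeasureTheory.integral_prod _ hint]
  -- inner integral
  have hinner : ∀ᵐ x ∂ν, (∫ y, y * (if y < x / r then 1 else 0) ∂ν)
      = α / (α + 1) * (min 1 (x / r)) ^ (α + 1) := by
    filter_upwards [BetaAux.ae_mem (α := α)] with x hx
    rw [hν2, BetaAux.integral_betaMeasure hα]
    exact BetaAux.inner_eval hα (div_pos hx.1 hr)
  rw [integral_congr_ae hinner, hν2, BetaAux.integral_betaMeasure hα]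
  -- outer integral, case split
  by_cases hr1 : r ≤ 1
  · -- r ≤ 1
    have hsplit : Set.Ioo (0:ℝ) 1 = Set.Ioo 0 r ∪ Set.Ico r 1 :=
      (Set.Ioo_union_Ico_eq_Ioo hr hr1).symm
    have hdisj : Disjoint (Set.Ioo (0:ℝ) r) (Set.Ico r 1) := by
      rw [Set.disjoint_left]
      rintro x ⟨_, hxr⟩ ⟨hrx, _⟩
      exact absurd hrx (not_le.mpr hxr)
    have heq1 : ∀ x ∈ Set.Ioo (0:ℝ) r,
        α * x ^ (α - 1) * (α / (α + 1) * (min 1 (x / r)) ^ (α + 1))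
          = (α ^ 2 / ((α + 1) * r ^ (α + 1))) * x ^ (2 * α) := by
      intro x hx
      have hx0 : 0 < x := hx.1
      have hxr : x / r < 1 := (div_lt_one hr).mpr hx.2
      rw [min_eq_right hxr.le, Real.div_rpow hx0.le hr.le]
      have hxx : x ^ (α - 1) * x ^ (α + 1) = x ^ (2 * α) := by
        rw [← Real.rpow_add hx0]; congr 1; ring
      have hrp : (0:ℝ) < r ^ (α + 1) := Real.rpow_pos_of_pos hr _
      rw [← hxx]
      field_simp
    have heq2 : ∀ x ∈ Set.Ico r (1:ℝ),
        α * x ^ (α - 1) * (α / (α + 1) * (min 1 (x / r)) ^ (α + 1))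
          = (α ^ 2 / (α + 1)) * x ^ (α - 1) := by
      intro x hx
      have h1 : (1:ℝ) ≤ x / r := (one_le_div hr).mpr hx.1
      rw [min_eq_left h1, Real.one_rpow]
      ring
    have hi1 : IntegrableOn
        (fun x => α * x ^ (α - 1) * (α / (α + 1) * (min 1 (x / r)) ^ (α + 1)))
        (Set.Ioo (0:ℝ) r) := by
      have h1 : IntervalIntegrable (fun x : ℝ => x ^ (2 * α)) volume 0 r :=
        intervalIntegral.intervalIntegrable_rpow' (by linarith)
      rw [intervalIntegrable_iff_integrableOn_Ioc_of_le hr.le] at h1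
      have h2 : IntegrableOn
          (fun x : ℝ => (α ^ 2 / ((α + 1) * r ^ (α + 1))) * x ^ (2 * α))
          (Set.Ioo (0:ℝ) r) :=
        (h1.mono_set Set.Ioo_subset_Ioc_self).const_mul _
      exact h2.congr_fun (fun x hx => (heq1 x hx).symm) measurableSet_Ioo
    have hi2 : IntegrableOn
        (fun x => α * x ^ (α - 1) * (α / (α + 1) * (min 1 (x / r)) ^ (α + 1)))
        (Set.Ico r (1:ℝ)) := by
      have hc : ContinuousOn (fun x : ℝ => (α ^ 2 / (α + 1)) * x ^ (α - 1))
          (Set.Icc r 1) := by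
        refine ContinuousOn.mul continuousOn_const ?_
        intro x hx
        exact (Real.continuousAt_rpow_const x (α - 1)
          (Or.inl (lt_of_lt_of_le hr hx.1).ne')).continuousWithinAt
      have h1 : IntegrableOn (fun x : ℝ => (α ^ 2 / (α + 1)) * x ^ (α - 1))
          (Set.Icc r 1) := hc.integrableOn_Icc
      exact (h1.mono_set Set.Ico_subset_Icc_self).congr_fun
        (fun x hx => (heq2 x hx).symm) measurableSet_Ico
    rw [hsplit, setIntegral_union hdisj measurableSet_Ico hi1 hi2]
    rw [setIntegral_congr_fun measurableSet_Ioo heq1,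
      setIntegral_congr_fun measurableSet_Ico heq2]
    rw [MeasureTheory.integral_const_mul, MeasureTheory.integral_const_mul]
    rw [MeasureTheory.integral_Ico_eq_integral_Ioo]
    rw [BetaAux.setIntegral_Ioo_rpow (by linarith : (-1:ℝ) < 2 * α) hr.le,
      BetaAux.setIntegral_Ioo_rpow (by linarith : (-1:ℝ) < α - 1) hr1]
    rw [show α - 1 + 1 = α by ring, Real.one_rpow,
      Real.zero_rpow (by linarith : (2*α+1 : ℝ) ≠ 0)]
    have hrpow : r ^ (2 * α + 1) = r ^ α * r ^ (α + 1) := by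
      rw [← Real.rpow_add hr]; ring_nf
    have hrp1 : (0:ℝ) < r ^ (α + 1) := Real.rpow_pos_of_pos hr _
    rw [Lbeta, if_pos hr1, hrpow]
    field_simp
    ring
  · -- r > 1
    push_neg at hr1
    have heq : ∀ x ∈ Set.Ioo (0:ℝ) 1,
        α * x ^ (α - 1) * (α / (α + 1) * (min 1 (x / r)) ^ (α + 1))
          = (α ^ 2 / ((α + 1) * r ^ (α + 1))) * x ^ (2 * α) := by
      intro x hx
      have hx0 : 0 < x := hx.1
      have hxr : x / r < 1 := by
        rw [div_lt_one hr]; exact lt_trans hx.2 hr1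
      rw [min_eq_right hxr.le, Real.div_rpow hx0.le hr.le]
      have hxx : x ^ (α - 1) * x ^ (α + 1) = x ^ (2 * α) := by
        rw [← Real.rpow_add hx0]; congr 1; ring
      have hrp : (0:ℝ) < r ^ (α + 1) := Real.rpow_pos_of_pos hr _
      rw [← hxx]
      field_simp
    rw [setIntegral_congr_fun measurableSet_Ioo heq, MeasureTheory.integral_const_mul,
      BetaAux.setIntegral_Ioo_rpow (by linarith : (-1:ℝ) < 2 * α) (by norm_num)]
    rw [Real.one_rpow, Real.zero_rpow (by linarith : (2*α+1 : ℝ) ≠ 0)]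
    rw [Lbeta, if_neg (not_le.mpr hr1), Real.rpow_neg hr.le]
    have hrp1 : (0:ℝ) < r ^ (α + 1) := Real.rpow_pos_of_pos hr _
    field_simp
    ring
end

section
/- Let α > 0, let C_1, ..., C_K > 0 be fixed base costs, and let u_1, ..., u_K be i.i.d. with density α x^{α-1} on (0,1), independent of the label. Define b_α := α²/((α+1)(2α+1)), L_α(r) := 1 + (1 + 1/α)(1 - r^α) for 0 < r ≤ 1 and L_α(r) := r^{-(α+1)} for r > 1, and the weighted Beta score S^Beta_{α,C}(p, i) := Σ_{j ≠ i} C_j · L_α((p_i/C_i) / (p_j/C_j)). Then for every p in the interior of the simplex and true class i, the expected optimal search cost under realized costs c_k = C_k u_k satisfies S(p, i) = (α/(α+1)) C_i + b_α · S^Beta_{α,C}(p, i). -/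
open MeasureTheory
open intervalIntegral in
open intervalIntegral in
theorem intervalIntegrable_rpow'' {a b r : ℝ} (h : -1 < r) : IntervalIntegrable (fun x : ℝ => x ^ r) volume a b := intervalIntegrable_rpow' h
theorem integral_rpow' {a b r : ℝ} (h : -1 < r) : ∫ x in a..b, x ^ r = (b ^ (r + 1) - a ^ (r + 1)) / (r + 1) := integral_rpow (Or.inl h)

/-- The weighted Beta score `S^Beta_{α,C}(p, i) = Σ_{j ≠ i} C j · L_α((p i/C i)/(p j/C j))`. -/
noncomputable def SBeta {K : ℕ} (α : ℝ) (C : Fin K → ℝ) (p : Fin K → ℝ) (i : Fin K) : ℝ :=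
  ∑ j ∈ Finset.univ.filter (fun j => j ≠ i), C j * Lbeta α ((p i / C i) / (p j / C j))

section Aux

variable {α : ℝ}

lemma beta_density_meas (α : ℝ) :
    Measurable fun x : ℝ => Real.toNNReal (if x ∈ Set.Ioo (0 : ℝ) 1 then α * x ^ (α - 1) else 0) := by
  apply Measurable.real_toNNReal
  have h : Measurable fun x : ℝ => x ^ (α - 1) := by measurability
  exact Measurable.ite measurableSet_Ioo (measurable_const.mul h) measurable_const

/-- Integral against the Beta measure as a set integral with density. -/
lemma integral_beta (hα : 0 < α) (f : ℝ → ℝ) :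
    ∫ x, f x ∂betaMeasure α = ∫ x in Set.Ioo (0 : ℝ) 1, α * x ^ (α - 1) * f x := by
  have hden : (fun x : ℝ => ENNReal.ofReal (if x ∈ Set.Ioo (0 : ℝ) 1 then α * x ^ (α - 1) else 0))
      = fun x => ((Real.toNNReal (if x ∈ Set.Ioo (0 : ℝ) 1 then α * x ^ (α - 1) else 0) : NNReal) : ENNReal) :=
    rfl
  rw [betaMeasure, hden, integral_withDensity_eq_integral_smul (beta_density_meas α) f,
    ← integral_indicator measurableSet_Ioo]
  congr 1
  ext x
  by_cases hx : x ∈ Set.Ioo (0 : ℝ) 1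
  · have hpos : 0 ≤ α * x ^ (α - 1) := mul_nonneg hα.le (Real.rpow_nonneg hx.1.le _)
    simp [hx, Set.indicator_of_mem, NNReal.smul_def, Real.coe_toNNReal _ hpos]
  · simp [hx, Set.indicator_of_notMem]

lemma beta_prob (hα : 0 < α) : IsProbabilityMeasure (betaMeasure α) := by
  constructor
  have hmeas : MeasurableSet (Set.univ : Set ℝ) := MeasurableSet.univ
  rw [betaMeasure, withDensity_apply _ hmeas, Measure.restrict_univ]
  have hint : IntegrableOn (fun x : ℝ => α * x ^ (α - 1)) (Set.Ioo 0 1) := by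
    have := (intervalIntegrable_rpow'' (r := α - 1) (a := 0) (b := 1) (by linarith)).const_mul α
    have h2 := (intervalIntegrable_iff_integrableOn_Ioc_of_le (by norm_num : (0:ℝ) ≤ 1)).1 this
    exact h2.mono_set Set.Ioo_subset_Ioc_self
  have hind : Integrable fun x : ℝ => if x ∈ Set.Ioo (0 : ℝ) 1 then α * x ^ (α - 1) else 0 := by
    have : (fun x : ℝ => if x ∈ Set.Ioo (0 : ℝ) 1 then α * x ^ (α - 1) else 0)
        = Set.indicator (Set.Ioo 0 1) (fun x => α * x ^ (α - 1)) := by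
      ext x; simp [Set.indicator]
    rw [this]
    exact hint.integrable_indicator measurableSet_Ioo
  rw [← ofReal_integral_eq_lintegral_ofReal hind (by
    filter_upwards with x
    by_cases hx : x ∈ Set.Ioo (0 : ℝ) 1
    · simp only [hx, if_true]
      exact mul_nonneg hα.le (Real.rpow_nonneg hx.1.le _)
    · simp [hx])]
  have : ∫ x : ℝ, (if x ∈ Set.Ioo (0 : ℝ) 1 then α * x ^ (α - 1) else 0) = 1 := by
    rw [show (fun x : ℝ => if x ∈ Set.Ioo (0 : ℝ) 1 then α * x ^ (α - 1) else 0)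
        = Set.indicator (Set.Ioo 0 1) (fun x => α * x ^ (α - 1)) by ext x; simp [Set.indicator]]
    rw [integral_indicator measurableSet_Ioo, ← integral_Ioc_eq_integral_Ioo,
      ← intervalIntegral.integral_of_le (by norm_num : (0:ℝ) ≤ 1),
      intervalIntegral.integral_const_mul, integral_rpow' (by linarith)]
    rw [sub_add_cancel, Real.one_rpow, Real.zero_rpow hα.ne']
    field_simp
    rw [sub_zero]
  rw [this, ENNReal.ofReal_one]

lemma beta_ae_Ioo (hα : 0 < α) : ∀ᵐ x ∂betaMeasure α, x ∈ Set.Ioo (0 : ℝ) 1 := by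
  rw [ae_iff]
  have hmeas : MeasurableSet {x : ℝ | ¬x ∈ Set.Ioo (0:ℝ) 1} := measurableSet_Ioo.compl
  rw [betaMeasure, withDensity_apply _ hmeas]
  rw [setLIntegral_congr_fun (f := fun x : ℝ =>
      ENNReal.ofReal (if x ∈ Set.Ioo (0 : ℝ) 1 then α * x ^ (α - 1) else 0))
    (g := fun _ : ℝ => (0 : ENNReal)) hmeas (fun x hx => by
      simp only [Set.mem_setOf_eq] at hx
      simp [hx])]
  simp

/-- Inner integral: `∫ y, y · 1(y < c) dBeta = (α/(α+1)) (min c 1)^(α+1)` for `c > 0`. -/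
lemma inner_int (hα : 0 < α) {c : ℝ} (hc : 0 < c) :
    ∫ y, y * (if y < c then (1:ℝ) else 0) ∂betaMeasure α
      = α / (α + 1) * min c 1 ^ (α + 1) := by
  rw [integral_beta hα]
  rw [setIntegral_congr_fun measurableSet_Ioo (g := Set.indicator (Set.Iio c) (fun y => α * y ^ α))
    (fun y hy => by
      rw [Set.indicator]
      by_cases h : y < c
      · rw [if_pos h, if_pos (Set.mem_Iio.2 h), mul_one]
        have : y ^ (α - 1) * y = y ^ α := by
          nth_rewrite 2 [← Real.rpow_one y]
          rw [← Real.rpow_add hy.1]; ring_nf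
        rw [mul_assoc, this]
      · rw [if_neg h, if_neg (by simpa using h), mul_zero, mul_zero])]
  rw [setIntegral_indicator measurableSet_Iio, Set.Ioo_inter_Iio]
  have hm : 0 < min (1:ℝ) c := lt_min one_pos hc
  rw [← integral_Ioc_eq_integral_Ioo, ← intervalIntegral.integral_of_le hm.le,
    intervalIntegral.integral_const_mul, integral_rpow' (by linarith)]
  rw [Real.zero_rpow (by positivity), min_comm]
  field_simp
  rw [sub_zero]

lemma beta_prod_ae (hα : 0 < α) :
    ∀ᵐ z ∂((betaMeasure α).prod (betaMeasure α)),
      z.1 ∈ Set.Ioo (0:ℝ) 1 ∧ z.2 ∈ Set.Ioo (0:ℝ) 1 := by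
  haveI := beta_prob hα
  have h1 : (betaMeasure α) (Set.Ioo (0:ℝ) 1)ᶜ = 0 := by
    have := beta_ae_Ioo hα
    rwa [ae_iff] at this
  rw [ae_iff]
  refine measure_mono_null (fun z hz => ?_) (?_ : ((betaMeasure α).prod (betaMeasure α))
    ((Set.Ioo (0:ℝ) 1)ᶜ ×ˢ (Set.univ : Set ℝ) ∪ (Set.univ : Set ℝ) ×ˢ (Set.Ioo (0:ℝ) 1)ᶜ) = 0)
  · simp only [Set.mem_setOf_eq, not_and_or] at hz
    rcases hz with hz | hz
    · exact Or.inl (by simp [hz])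
    · exact Or.inr (by simp [hz])
  · apply measure_union_null <;> rw [Measure.prod_prod] <;> simp [h1]

/-- The key double integral against two independent Beta measures. -/
lemma key_int (hα : 0 < α) {r : ℝ} (hr : 0 < r) :
    ∫ z, (z.2 * if r * z.2 < z.1 then (1:ℝ) else 0) ∂((betaMeasure α).prod (betaMeasure α))
      = α ^ 2 / ((α + 1) * (2 * α + 1)) * Lbeta α r := by
  haveI := beta_prob hα
  have hfm : Measurable fun z : ℝ × ℝ => z.2 * if r * z.2 < z.1 then (1:ℝ) else 0 :=
    measurable_snd.mul (Measurable.ite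
      (measurableSet_lt (measurable_const.mul measurable_snd) measurable_fst)
      measurable_const measurable_const)
  have hint : Integrable (fun z : ℝ × ℝ => z.2 * if r * z.2 < z.1 then (1:ℝ) else 0)
      ((betaMeasure α).prod (betaMeasure α)) := by
    refine (integrable_const (1:ℝ)).mono' hfm.aestronglyMeasurable ?_
    filter_upwards [beta_prod_ae hα] with z hz
    have h2 : |z.2| ≤ 1 := by
      rw [abs_of_pos hz.2.1]; exact hz.2.2.le
    rw [Real.norm_eq_abs, abs_mul]
    calc |z.2| * |if r * z.2 < z.1 then (1:ℝ) else 0| ≤ 1 * 1 := by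
          apply mul_le_mul h2 _ (abs_nonneg _) zero_le_one
          split_ifs <;> simp
      _ = 1 := by norm_num
  rw [MeasureTheory.integral_prod _ hint]
  rw [integral_beta hα]
  rw [setIntegral_congr_fun measurableSet_Ioo
    (g := fun x => α * x ^ (α - 1) * (α / (α + 1) * min (x / r) 1 ^ (α + 1)))
    (fun x hx => by
      congr 1
      have : ∀ y : ℝ, (y * if r * y < x then (1:ℝ) else 0)
          = (y * if y < x / r then (1:ℝ) else 0) := by
        intro y
        congr 1
        apply if_congr _ rfl rfl
        rw [lt_div_iff₀ hr, mul_comm]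
      simp_rw [this]
      exact inner_int hα (div_pos hx.1 hr))]
  -- now a pure real-integral computation
  have hα1 : (0:ℝ) < α + 1 := by linarith
  have h2α1 : (0:ℝ) < 2 * α + 1 := by linarith
  have hbase : ∀ a b : ℝ, IntervalIntegrable
      (fun x : ℝ => α * x ^ (α - 1) * (α / (α + 1) * min (x / r) 1 ^ (α + 1))) volume a b := by
    intro a b
    have h1 : IntervalIntegrable (fun x : ℝ => α * x ^ (α - 1)) volume a b :=
      (intervalIntegrable_rpow'' (by linarith)).const_mul α
    have h2 : Continuous fun x : ℝ => α / (α + 1) * min (x / r) 1 ^ (α + 1) := by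
      apply continuous_const.mul
      apply Continuous.rpow_const ((continuous_id.div_const r).min continuous_const)
      intro x; exact Or.inr (by linarith)
    exact h1.mul_continuousOn h2.continuousOn
  have hIoc : ∀ a b : ℝ, a ≤ b → IntegrableOn
      (fun x : ℝ => α * x ^ (α - 1) * (α / (α + 1) * min (x / r) 1 ^ (α + 1)))
      (Set.Ioc a b) volume :=
    fun a b hab => (intervalIntegrable_iff_integrableOn_Ioc_of_le hab).1 (hbase a b)
  have hrne : r ^ (α + 1) ≠ 0 := by positivity
  -- formula on the lower piece
  have hlow : ∀ x ∈ Set.Ioc (0:ℝ) (min r 1),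
      α * x ^ (α - 1) * (α / (α + 1) * min (x / r) 1 ^ (α + 1))
        = α * α / ((α + 1) * r ^ (α + 1)) * x ^ (2 * α) := by
    intro x hx
    have hx0 : 0 < x := hx.1
    have hxr : x ≤ r := hx.2.trans (min_le_left _ _)
    have hmin : min (x / r) 1 = x / r := min_eq_left ((div_le_one hr).2 hxr)
    rw [hmin, Real.div_rpow hx0.le hr.le]
    have hxx : x ^ (α - 1) * x ^ (α + 1) = x ^ (2 * α) := by
      rw [← Real.rpow_add hx0]; ring_nf
    field_simp
    rw [mul_comm (x ^ (α - 1)) (x ^ (α + 1)), mul_comm (x ^ (α + 1)) _] at *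
    rw [mul_comm 2 α] at hxx
    nlinarith [hxx]
  rw [← integral_Ioc_eq_integral_Ioo]
  rcases le_or_gt r 1 with hr1 | hr1
  · -- r ≤ 1 : split at r
    have hsplit : Set.Ioc (0:ℝ) 1 = Set.Ioc 0 r ∪ Set.Ioc r 1 :=
      (Set.Ioc_union_Ioc_eq_Ioc hr.le hr1).symm
    rw [hsplit, setIntegral_union (Set.Ioc_disjoint_Ioc_of_le le_rfl) measurableSet_Ioc
      (hIoc 0 r hr.le) (hIoc r 1 hr1)]
    have hmin_r : min r 1 = r := min_eq_left hr1
    have e1 : ∫ x in Set.Ioc (0:ℝ) r,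
        α * x ^ (α - 1) * (α / (α + 1) * min (x / r) 1 ^ (α + 1))
          = α * α / ((α + 1) * r ^ (α + 1)) * (r ^ (2 * α + 1) / (2 * α + 1)) := by
      rw [setIntegral_congr_fun measurableSet_Ioc (fun x hx => hlow x (by rwa [hmin_r]))]
      rw [← intervalIntegral.integral_of_le hr.le, intervalIntegral.integral_const_mul,
        integral_rpow' (by linarith)]
      rw [Real.zero_rpow (by positivity)]
      ring_nf
    have e2 : ∫ x in Set.Ioc r 1,
        α * x ^ (α - 1) * (α / (α + 1) * min (x / r) 1 ^ (α + 1))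
          = α * α / (α + 1) * ((1 - r ^ α) / α) := by
      rw [setIntegral_congr_fun measurableSet_Ioc
        (g := fun x => α * α / (α + 1) * x ^ (α - 1)) (fun x hx => by
          have hmin : min (x / r) 1 = 1 := min_eq_right ((one_le_div hr).2 hx.1.le)
          rw [hmin, Real.one_rpow]; ring)]
      rw [← intervalIntegral.integral_of_le hr1, intervalIntegral.integral_const_mul,
        integral_rpow' (by linarith)]
      rw [sub_add_cancel, Real.one_rpow]
    rw [e1, e2, Lbeta, if_pos hr1]
    have hkey : r ^ (2 * α + 1) = r ^ (α + 1) * r ^ α := by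
      rw [← Real.rpow_add hr]; ring_nf
    rw [hkey]
    field_simp
    ring
  · -- 1 < r : single piece
    have hmin_r : min r 1 = 1 := min_eq_right hr1.le
    rw [setIntegral_congr_fun measurableSet_Ioc (fun x hx => hlow x (by rwa [hmin_r]))]
    rw [← intervalIntegral.integral_of_le (by norm_num : (0:ℝ) ≤ 1),
      intervalIntegral.integral_const_mul, integral_rpow' (by linarith)]
    rw [Real.zero_rpow (by positivity), Real.one_rpow, Lbeta, if_neg (not_le.2 hr1),
      Real.rpow_neg hr.le]
    field_simp
    ring

end Aux

/-- **Weighted Beta form of expected search cost.** With base costs `C k > 0`,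
i.i.d. `Beta(α, 1)` unit costs `u k`, and realized costs `c k = C k · u k`, the
expected optimal search cost
`S(p, i) = E[c i] + Σ_{j ≠ i} E[c j · 1(c i/c j > p i/p j)]` satisfies
`S(p, i) = (α/(α+1)) C i + b_α · S^Beta_{α,C}(p, i)` where
`b_α = α²/((α+1)(2α+1))`. -/
theorem weighted_beta_form (K : ℕ) (hK : 2 ≤ K) {Ω : Type*} [MeasurableSpace Ω]
    (μ : Measure Ω) [IsProbabilityMeasure μ] (α : ℝ) (hα : 0 < α)
    (C : Fin K → ℝ) (hC : ∀ k, 0 < C k)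
    (u : Fin K → Ω → ℝ) (hmeas : ∀ k, Measurable (u k))
    (hindep : ProbabilityTheory.iIndepFun u μ)
    (hlaw : ∀ k, μ.map (u k) = betaMeasure α)
    (p : Fin K → ℝ) (hp : ∀ k, 0 < p k) (hps : ∑ k, p k = 1) (i : Fin K) :
    (∫ ω, C i * u i ω ∂μ) + ∑ j ∈ Finset.univ.filter (fun j => j ≠ i),
        ∫ ω, C j * u j ω * (if p i / p j < (C i * u i ω) / (C j * u j ω) then 1 else 0) ∂μ
      = α / (α + 1) * C i + α ^ 2 / ((α + 1) * (2 * α + 1)) * SBeta α C p i := by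
  haveI := beta_prob hα
  have hα1 : (0:ℝ) < α + 1 := by linarith
  -- mean term
  have hmean : ∫ ω, C i * u i ω ∂μ = α / (α + 1) * C i := by
    rw [MeasureTheory.integral_const_mul]
    have h1 : ∫ ω, u i ω ∂μ = ∫ x, x ∂betaMeasure α := by
      rw [← hlaw i]
      exact (integral_map (hmeas i).aemeasurable measurable_id.aestronglyMeasurable).symm
    rw [h1, integral_beta hα (fun x => x)]
    have : ∀ x ∈ Set.Ioc (0:ℝ) 1, α * x ^ (α - 1) * x = α * x ^ α := by
      intro x hx
      have h : x ^ (α - 1) * x = x ^ α := by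
        nth_rewrite 2 [← Real.rpow_one x]
        rw [← Real.rpow_add hx.1]; ring_nf
      rw [mul_assoc, h]
    rw [← integral_Ioc_eq_integral_Ioo, setIntegral_congr_fun measurableSet_Ioc this,
      ← intervalIntegral.integral_of_le (by norm_num : (0:ℝ) ≤ 1),
      intervalIntegral.integral_const_mul, integral_rpow' (by linarith)]
    rw [Real.one_rpow, Real.zero_rpow (by positivity)]
    field_simp
    ring
  -- cross terms
  have hterm : ∀ j : Fin K, j ≠ i →
      (∫ ω, C j * u j ω * (if p i / p j < (C i * u i ω) / (C j * u j ω) then 1 else 0) ∂μ)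
        = α ^ 2 / ((α + 1) * (2 * α + 1)) * (C j * Lbeta α ((p i / C i) / (p j / C j))) := by
    intro j hj
    set r : ℝ := (p i / C i) / (p j / C j) with hrdef
    have hrpos : 0 < r := by
      apply div_pos (div_pos (hp i) (hC i)) (div_pos (hp j) (hC j))
    have hG : Measurable fun z : ℝ × ℝ =>
        C j * z.2 * (if p i / p j < C i * z.1 / (C j * z.2) then (1:ℝ) else 0) := by
      apply ((measurable_const.mul measurable_snd).mul)
      exact Measurable.ite (measurableSet_lt measurable_const
        ((measurable_const.mul measurable_fst).div (measurable_const.mul measurable_snd)))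
        measurable_const measurable_const
    have hφ : AEMeasurable (fun ω => (u i ω, u j ω)) μ :=
      ((hmeas i).prodMk (hmeas j)).aemeasurable
    have hpair : μ.map (fun ω => (u i ω, u j ω)) = (betaMeasure α).prod (betaMeasure α) := by
      have hIndep : ProbabilityTheory.IndepFun (u i) (u j) μ :=
        hindep.indepFun hj.symm
      rw [(ProbabilityTheory.indepFun_iff_map_prod_eq_prod_map_map (hmeas i).aemeasurable
        (hmeas j).aemeasurable).1 hIndep, hlaw i, hlaw j]
    have step1 : (∫ ω, C j * u j ω * (if p i / p j < (C i * u i ω) / (C j * u j ω) then 1 else 0) ∂μ)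
        = ∫ z : ℝ × ℝ, C j * z.2 * (if p i / p j < C i * z.1 / (C j * z.2) then (1:ℝ) else 0)
            ∂((betaMeasure α).prod (betaMeasure α)) := by
      rw [← hpair, integral_map hφ hG.aestronglyMeasurable]
    rw [step1]
    have step2 : ∫ z : ℝ × ℝ, C j * z.2 * (if p i / p j < C i * z.1 / (C j * z.2) then (1:ℝ) else 0)
            ∂((betaMeasure α).prod (betaMeasure α))
        = ∫ z : ℝ × ℝ, C j * (z.2 * if r * z.2 < z.1 then (1:ℝ) else 0)
            ∂((betaMeasure α).prod (betaMeasure α)) := by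
      apply integral_congr_ae
      filter_upwards [beta_prod_ae hα] with z hz
      rw [mul_assoc]
      congr 1
      congr 1
      apply if_congr _ rfl rfl
      have hy : 0 < z.2 := hz.2.1
      rw [div_lt_div_iff₀ (hp j) (mul_pos (hC j) hy)]
      have hr' : r = p i * C j / (C i * p j) := by
        rw [hrdef]
        field_simp
      rw [hr', div_mul_eq_mul_div, div_lt_iff₀ (mul_pos (hC i) (hp j))]
      constructor <;> intro h <;> nlinarith [h]
    rw [step2, MeasureTheory.integral_const_mul, key_int hα hrpos]
    ring
  rw [hmean, Finset.sum_congr rfl (fun j hj => hterm j (Finset.mem_filter.1 hj).2), SBeta,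
    Finset.mul_sum]
end

section
/- Let α > 0 and C_1, ..., C_K > 0. Define L_α(r) := 1 + (1 + 1/α)(1 - r^α) for 0 < r ≤ 1 and L_α(r) := r^{-(α+1)} for r > 1, and the weighted Beta score S^Beta_{α,C}(p, i) := Σ_{j ≠ i} C_j · L_α((p_i/C_i) / (p_j/C_j)) for p in the interior of the simplex Δ^{K-1}, K ≥ 2. Then S^Beta_{α,C} is strictly proper: for every π in the interior of the simplex, Σ_i π_i S^Beta_{α,C}(p, i) is uniquely minimized over p in the interior of the simplex at p = π. -/
open Set

noncomputable def H1 (α a b t : ℝ) : ℝ :=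
  a * (1 + (1 + 1/α) * (1 - t ^ α)) + b * t ^ (α + 1)

noncomputable def H2 (α a b t : ℝ) : ℝ :=
  a * t ^ (-(α+1)) + b * (1 + (1 + 1/α) * (1 - t ^ (-α)))

lemma Lbeta_of_le {α t : ℝ} (h : t ≤ 1) : Lbeta α t = 1 + (1 + 1/α) * (1 - t ^ α) := by
  rw [Lbeta, if_pos h]

lemma Lbeta_of_ge {α t : ℝ} (h : 1 ≤ t) : Lbeta α t = t ^ (-(α+1)) := by
  rcases eq_or_lt_of_le h with h1 | h1
  · rw [← h1]; simp [Lbeta, Real.one_rpow]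
  · rw [Lbeta, if_neg (not_le.mpr h1)]

lemma G_eq_H1 {α a b t : ℝ} (ht : 0 < t) (h1 : t ≤ 1) :
    a * Lbeta α t + b * Lbeta α t⁻¹ = H1 α a b t := by
  rw [Lbeta_of_le h1, Lbeta_of_ge (one_le_inv_iff₀.mpr ⟨ht, h1⟩), H1,
    Real.inv_rpow ht.le, Real.rpow_neg ht.le, inv_inv]

lemma G_eq_H2 {α a b t : ℝ} (h1 : 1 ≤ t) :
    a * Lbeta α t + b * Lbeta α t⁻¹ = H2 α a b t := by
  have ht : 0 < t := lt_of_lt_of_le one_pos h1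
  rw [Lbeta_of_ge h1, Lbeta_of_le (inv_le_one_of_one_le₀ h1), H2,
    Real.inv_rpow ht.le, ← Real.rpow_neg ht.le]

lemma hasDerivAt_H1 {α : ℝ} (hα : 0 < α) (a b : ℝ) {t : ℝ} (ht : 0 < t) :
    HasDerivAt (H1 α a b) ((α+1) * t ^ (α-1) * (b * t - a)) t := by
  have h1 : HasDerivAt (fun x : ℝ => x ^ α) (α * t ^ (α-1)) t :=
    Real.hasDerivAt_rpow_const (Or.inl ht.ne')
  have h2 : HasDerivAt (fun x : ℝ => x ^ (α+1)) ((α+1) * t ^ (α+1-1)) t :=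
    Real.hasDerivAt_rpow_const (Or.inl ht.ne')
  have h3 := ((((h1.const_sub 1).const_mul ((1:ℝ)+1/α)).const_add 1).const_mul a).add
    (h2.const_mul b)
  convert h3 using 1
  · rfl
  · rfl
  · rfl
  have e1 : t ^ (α + 1 - 1) = t ^ α := by norm_num
  have e2 : t ^ α = t ^ (α - 1) * t := by
    rw [← Real.rpow_add_one ht.ne']; norm_num
  rw [e1, e2]
  field_simp
  ring

lemma hasDerivAt_H2 {α : ℝ} (hα : 0 < α) (a b : ℝ) {t : ℝ} (ht : 0 < t) :
    HasDerivAt (H2 α a b) ((α+1) * t ^ (-α-2) * (b * t - a)) t := by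
  have h1 : HasDerivAt (fun x : ℝ => x ^ (-(α+1))) ((-(α+1)) * t ^ (-(α+1)-1)) t :=
    Real.hasDerivAt_rpow_const (Or.inl ht.ne')
  have h2 : HasDerivAt (fun x : ℝ => x ^ (-α)) ((-α) * t ^ (-α-1)) t :=
    Real.hasDerivAt_rpow_const (Or.inl ht.ne')
  have h3 := (h1.const_mul a).add
    ((((h2.const_sub 1).const_mul ((1:ℝ)+1/α)).const_add 1).const_mul b)
  convert h3 using 1
  · rfl
  · rfl
  · rfl
  have e1 : t ^ (-(α+1) - 1) = t ^ (-α-2) := by norm_num; ring_nf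
  have e2 : t ^ (-α-1) = t ^ (-α-2) * t := by
    rw [← Real.rpow_add_one ht.ne']; ring_nf
  rw [e1, e2]
  field_simp
  ring

lemma H1_min {α a b : ℝ} (hα : 0 < α) (ha : 0 < a) (hb : 0 < b) {t : ℝ}
    (ht : 0 < t) (hne : t ≠ a / b) : H1 α a b (a/b) < H1 α a b t := by
  have ht₀ : 0 < a / b := div_pos ha hb
  rcases lt_or_gt_of_ne hne with h | h
  · have mono : StrictAntiOn (H1 α a b) (Icc t (a/b)) := by
      apply strictAntiOn_of_deriv_neg (convex_Icc _ _)
      · intro z hz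
        exact (hasDerivAt_H1 hα a b (lt_of_lt_of_le ht hz.1)).continuousAt.continuousWithinAt
      · intro z hz
        rw [interior_Icc] at hz
        have hz0 : 0 < z := ht.trans hz.1
        rw [(hasDerivAt_H1 hα a b hz0).deriv]
        have hlt : b * z - a < 0 := by
          have := (lt_div_iff₀ hb).mp hz.2
          linarith
        have hpos : (0:ℝ) < (α+1) * z ^ (α-1) := by positivity
        exact mul_neg_of_pos_of_neg hpos hlt
    exact mono (left_mem_Icc.mpr h.le) (right_mem_Icc.mpr h.le) h
  · have mono : StrictMonoOn (H1 α a b) (Icc (a/b) t) := by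
      apply strictMonoOn_of_deriv_pos (convex_Icc _ _)
      · intro z hz
        exact (hasDerivAt_H1 hα a b (lt_of_lt_of_le ht₀ hz.1)).continuousAt.continuousWithinAt
      · intro z hz
        rw [interior_Icc] at hz
        have hz0 : 0 < z := ht₀.trans hz.1
        rw [(hasDerivAt_H1 hα a b hz0).deriv]
        have hlt : 0 < b * z - a := by
          have := (div_lt_iff₀ hb).mp hz.1
          linarith
        have hpos : (0:ℝ) < (α+1) * z ^ (α-1) := by positivity
        exact mul_pos hpos hlt
    exact mono (left_mem_Icc.mpr h.le) (right_mem_Icc.mpr h.le) h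

lemma key' {α a b : ℝ} (hα : 0 < α) (ha : 0 < a) (hb : 0 < b) (hab : a ≤ b) {t : ℝ}
    (ht : 0 < t) (hne : t ≠ a / b) :
    a * Lbeta α (a/b) + b * Lbeta α (a/b)⁻¹ < a * Lbeta α t + b * Lbeta α t⁻¹ := by
  have ht₀ : 0 < a/b := div_pos ha hb
  have ht₀1 : a/b ≤ 1 := (div_le_one hb).mpr hab
  rw [G_eq_H1 ht₀ ht₀1]
  rcases le_or_gt t 1 with h | h
  · rw [G_eq_H1 ht h]; exact H1_min hα ha hb ht hne
  · rw [G_eq_H2 h.le]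
    have h1 : H1 α a b (a/b) ≤ H1 α a b 1 := by
      rcases eq_or_lt_of_le ht₀1 with he | hlt
      · rw [he]
      · exact (H1_min hα ha hb one_pos hlt.ne').le
    have h2 : H1 α a b 1 = H2 α a b 1 := by
      simp [H1, H2, Real.one_rpow]
    have h3 : H2 α a b 1 < H2 α a b t := by
      have mono : StrictMonoOn (H2 α a b) (Icc 1 t) := by
        apply strictMonoOn_of_deriv_pos (convex_Icc _ _)
        · intro z hz
          exact (hasDerivAt_H2 hα a b (lt_of_lt_of_le one_pos hz.1)).continuousAt.continuousWithinAt
        · intro z hz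
          rw [interior_Icc] at hz
          have hz0 : (0:ℝ) < z := lt_trans one_pos hz.1
          rw [(hasDerivAt_H2 hα a b hz0).deriv]
          have hlt : 0 < b * z - a := by nlinarith [hz.1]
          have hpos : (0:ℝ) < (α+1) * z ^ (-α-2) := by positivity
          exact mul_pos hpos hlt
      exact mono (left_mem_Icc.mpr h.le) (right_mem_Icc.mpr h.le) h
    linarith

lemma key_lt {α a b : ℝ} (hα : 0 < α) (ha : 0 < a) (hb : 0 < b) {t : ℝ}
    (ht : 0 < t) (hne : t ≠ a / b) :
    a * Lbeta α (a/b) + b * Lbeta α (b/a) < a * Lbeta α t + b * Lbeta α t⁻¹ := by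
  rcases le_total a b with hab | hab
  · rw [← inv_div a b]
    exact key' hα ha hb hab ht hne
  · have hne' : t⁻¹ ≠ b / a := by
      intro hEq
      apply hne
      rw [← inv_inv t, hEq, inv_div]
    have := key' hα hb ha hab (inv_pos.mpr ht) hne'
    rw [inv_inv, inv_div] at this
    linarith

lemma key_le {α a b : ℝ} (hα : 0 < α) (ha : 0 < a) (hb : 0 < b) {t : ℝ} (ht : 0 < t) :
    a * Lbeta α (a/b) + b * Lbeta α (b/a) ≤ a * Lbeta α t + b * Lbeta α t⁻¹ := by
  by_cases h : t = a / b
  · rw [h, inv_div]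
  · exact (key_lt hα ha hb ht h).le

lemma ratio_eq {x y c d : ℝ} (hc : c ≠ 0) (hd : d ≠ 0) (hy : y ≠ 0) :
    (x / c) / (y / d) = (x * d) / (y * c) := by
  rw [div_div_div_comm, div_div_eq_mul_div, div_mul_eq_mul_div, mul_comm y c, div_div, mul_comm c y]

lemma pair_le {α : ℝ} (hα : 0 < α) {ci cj pi pj qi qj : ℝ}
    (hci : 0 < ci) (hcj : 0 < cj) (hpi : 0 < pi) (hpj : 0 < pj)
    (hqi : 0 < qi) (hqj : 0 < qj) :
    pi * (cj * Lbeta α ((pi/ci)/(pj/cj))) + pj * (ci * Lbeta α ((pj/cj)/(pi/ci)))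
      ≤ pi * (cj * Lbeta α ((qi/ci)/(qj/cj))) + pj * (ci * Lbeta α ((qj/cj)/(qi/ci))) := by
  have e1 : (pi/ci)/(pj/cj) = (pi*cj)/(pj*ci) := ratio_eq hci.ne' hcj.ne' hpj.ne'
  have e2 : (pj/cj)/(pi/ci) = (pj*ci)/(pi*cj) := ratio_eq hcj.ne' hci.ne' hpi.ne'
  have e3 : (qi/ci)/(qj/cj) = (qi*cj)/(qj*ci) := ratio_eq hci.ne' hcj.ne' hqj.ne'
  have e4 : (qj/cj)/(qi/ci) = ((qi*cj)/(qj*ci))⁻¹ := by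
    rw [ratio_eq hcj.ne' hci.ne' hqi.ne', inv_div]
  rw [e1, e2, e3, e4, ← mul_assoc, ← mul_assoc, ← mul_assoc, ← mul_assoc]
  exact key_le hα (mul_pos hpi hcj) (mul_pos hpj hci) (div_pos (mul_pos hqi hcj) (mul_pos hqj hci))

lemma pair_lt {α : ℝ} (hα : 0 < α) {ci cj pi pj qi qj : ℝ}
    (hci : 0 < ci) (hcj : 0 < cj) (hpi : 0 < pi) (hpj : 0 < pj)
    (hqi : 0 < qi) (hqj : 0 < qj) (hne : qi * pj ≠ pi * qj) :
    pi * (cj * Lbeta α ((pi/ci)/(pj/cj))) + pj * (ci * Lbeta α ((pj/cj)/(pi/ci)))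
      < pi * (cj * Lbeta α ((qi/ci)/(qj/cj))) + pj * (ci * Lbeta α ((qj/cj)/(qi/ci))) := by
  have e1 : (pi/ci)/(pj/cj) = (pi*cj)/(pj*ci) := ratio_eq hci.ne' hcj.ne' hpj.ne'
  have e2 : (pj/cj)/(pi/ci) = (pj*ci)/(pi*cj) := ratio_eq hcj.ne' hci.ne' hpi.ne'
  have e3 : (qi/ci)/(qj/cj) = (qi*cj)/(qj*ci) := ratio_eq hci.ne' hcj.ne' hqj.ne'
  have e4 : (qj/cj)/(qi/ci) = ((qi*cj)/(qj*ci))⁻¹ := by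
    rw [ratio_eq hcj.ne' hci.ne' hqi.ne', inv_div]
  have htne : (qi*cj)/(qj*ci) ≠ (pi*cj)/(pj*ci) := by
    intro hEq
    have h2 := (div_eq_div_iff (by positivity) (by positivity)).mp hEq
    apply hne
    have h3 : (qi * pj) * (ci * cj) = (pi * qj) * (ci * cj) := by linear_combination h2
    exact mul_right_cancel₀ (by positivity) h3
  rw [e1, e2, e3, e4, ← mul_assoc, ← mul_assoc, ← mul_assoc, ← mul_assoc]
  exact key_lt hα (mul_pos hpi hcj) (mul_pos hpj hci)
    (div_pos (mul_pos hqi hcj) (mul_pos hqj hci)) htne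

/-- **Strict propriety of the weighted Beta score.** -/
theorem weighted_beta_strictly_proper (K : ℕ) (hK : 2 ≤ K) (α : ℝ) (hα : 0 < α)
    (C : Fin K → ℝ) (hC : ∀ k, 0 < C k)
    (π : Fin K → ℝ) (hπ : ∀ k, 0 < π k) (hπs : ∑ k, π k = 1)
    (p : Fin K → ℝ) (hp : ∀ k, 0 < p k) (hps : ∑ k, p k = 1) (hne : p ≠ π) :
    ∑ i, π i * SBeta α C π i < ∑ i, π i * SBeta α C p i := by
  classical
  -- find a witness pair
  have hwit : ∃ i j : Fin K, p i * π j ≠ π i * p j := by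
    by_contra hcon
    push_neg at hcon
    apply hne
    funext i
    have h1 : p i * (∑ j, π j) = π i * (∑ j, p j) := by
      rw [Finset.mul_sum, Finset.mul_sum]
      exact Finset.sum_congr rfl fun j _ => hcon i j
    rw [hπs, hps] at h1
    simpa using h1
  obtain ⟨i₀, j₀, hwit⟩ := hwit
  have hij₀ : j₀ ≠ i₀ := by
    rintro rfl
    exact hwit (mul_comm _ _)
  set F : (Fin K → ℝ) → Fin K × Fin K → ℝ := fun q x =>
    if x.2 ≠ x.1 then
      π x.1 * (C x.2 * Lbeta α ((q x.1 / C x.1) / (q x.2 / C x.2)))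
        + π x.2 * (C x.1 * Lbeta α ((q x.2 / C x.2) / (q x.1 / C x.1)))
    else 0 with hF
  have hscore : ∀ q : Fin K → ℝ,
      2 * ∑ i, π i * SBeta α C q i = ∑ x : Fin K × Fin K, F q x := by
    intro q
    have e1 : ∑ i, π i * SBeta α C q i
        = ∑ x : Fin K × Fin K, (if x.2 ≠ x.1 then
            π x.1 * (C x.2 * Lbeta α ((q x.1 / C x.1) / (q x.2 / C x.2))) else 0) := by
      rw [Fintype.sum_prod_type]
      refine Finset.sum_congr rfl fun i _ => ?_
      rw [SBeta, Finset.mul_sum, Finset.sum_filter]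
    have e2 : ∑ x : Fin K × Fin K, (if x.2 ≠ x.1 then
            π x.1 * (C x.2 * Lbeta α ((q x.1 / C x.1) / (q x.2 / C x.2))) else 0)
        = ∑ x : Fin K × Fin K, (if x.2 ≠ x.1 then
            π x.2 * (C x.1 * Lbeta α ((q x.2 / C x.2) / (q x.1 / C x.1))) else 0) := by
      apply Fintype.sum_equiv (Equiv.prodComm (Fin K) (Fin K))
      intro x
      rcases eq_or_ne x.2 x.1 with h | h
      · simp [h]
      · simp [h, h.symm]
    rw [two_mul, e1]
    nth_rewrite 2 [e2]
    rw [← Finset.sum_add_distrib]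
    refine Finset.sum_congr rfl fun x _ => ?_
    rcases eq_or_ne x.2 x.1 with h | h
    · simp [hF, h]
    · simp only [hF, if_pos h]
  have hmain : ∑ x : Fin K × Fin K, F π x < ∑ x : Fin K × Fin K, F p x := by
    apply Finset.sum_lt_sum
    · intro x _
      rcases eq_or_ne x.2 x.1 with h | h
      · simp [hF, h]
      · simp only [hF, if_pos h]
        exact pair_le hα (hC x.1) (hC x.2) (hπ x.1) (hπ x.2) (hp x.1) (hp x.2)
    · refine ⟨(i₀, j₀), Finset.mem_univ _, ?_⟩
      simp only [hF, if_pos hij₀]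
      exact pair_lt hα (hC i₀) (hC j₀) (hπ i₀) (hπ j₀) (hp i₀) (hp j₀) hwit
  have h1 := hscore π
  have h2 := hscore p
  linarith
end

section
/- Let K ≥ 2, let p be in the interior of the simplex Δ^{K-1}, and let i be the true class. For each class k, define the risk of the binary decision that treats class k when c < p_k, under the cost density 1/c on (0,1]: R_i := ∫_0^{p_i} c · (1/c) dc + ∫_{p_i}^1 1 · (1/c) dc for the true class, and R_k := ∫_0^{p_k} c · (1/c) dc for each k ≠ i. Then the total cost satisfies R_i + Σ_{k ≠ i} R_k = 1 - ln p_i. -/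
/-- **Cost amnesia, parallel case.** For `K ≥ 2`, `p` in the interior of the
simplex, and true class `i`, the integrated risks of the `K` independent binary
decisions under the cost density `1/c` on `(0, 1]` — namely
`R_i = ∫_0^{p i} c · (1/c) dc + ∫_{p i}^1 1 · (1/c) dc` for the true class and
`R_k = ∫_0^{p k} c · (1/c) dc` for each `k ≠ i` — sum to `1 - ln (p i)`. -/
theorem parallel_cost_amnesia (K : ℕ) (hK : 2 ≤ K) (p : Fin K → ℝ)
    (hp : ∀ k, 0 < p k) (hps : ∑ k, p k = 1) (i : Fin K) :
    ((∫ c in (0 : ℝ)..(p i), c * (1 / c)) + ∫ c in (p i)..1, 1 * (1 / c))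
      + ∑ k ∈ Finset.univ.filter (fun k => k ≠ i), ∫ c in (0 : ℝ)..(p k), c * (1 / c)
      = 1 - Real.log (p i) := by
  have key : ∀ k : Fin K, (∫ c in (0 : ℝ)..(p k), c * (1 / c)) = p k := by
    intro k
    have : (∫ c in (0 : ℝ)..(p k), c * (1 / c)) = ∫ c in (0 : ℝ)..(p k), (1 : ℝ) := by
      apply intervalIntegral.integral_congr_ae
      filter_upwards with x hx
      rw [Set.uIoc_of_le (hp k).le] at hx
      field_simp [ne_of_gt hx.1]
    rw [this]; simp
  have hlog : (∫ c in (p i)..1, 1 * (1 / c)) = - Real.log (p i) := by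
    simp only [one_mul]
    rw [integral_one_div_of_pos (hp i) one_pos]
    simp [Real.log_div, ne_of_gt (hp i)]
  rw [key i, hlog]
  have hsum : ∑ k ∈ Finset.univ.filter (fun k => k ≠ i),
      (∫ c in (0 : ℝ)..(p k), c * (1 / c)) = ∑ k ∈ Finset.univ.filter (fun k => k ≠ i), p k := by
    exact Finset.sum_congr rfl fun k _ => key k
  rw [hsum]
  have : ∑ k ∈ Finset.univ.filter (fun k => k ≠ i), p k = 1 - p i := by
    have := Finset.sum_filter_add_sum_filter_not Finset.univ (fun k => k ≠ i) p
    simp only [not_ne_iff, Finset.filter_eq', Finset.mem_univ, if_true, Finset.sum_singleton] at this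
    linarith [hps, this]
  rw [this]; ring
end

section
/- Let K ≥ 2, let p be in the interior of the simplex Δ^{K-1}, let σ be a permutation of {1, ..., K} (the fixed search order), and let the true class i appear at position m, i.e. σ(m) = i. Define the tail sums S_{t-1} := Σ_{s=t}^{K} p_{σ(s)} and the conditional hazards h_t := p_{σ(t)} / S_{t-1}. Define the integrated stepwise regrets J_t := ∫_0^{h_t} c · dc/(c(1-c)) for each false step t < m, and J_m := ∫_{h_m}^1 (1-c) · dc/(c(1-c)) for the true step. Then J_m + Σ_{t=1}^{m-1} J_t = -ln p_i. -/
/-- **Cost amnesia for fixed-order search.** For `K ≥ 2`, `p` in the interior of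
the simplex, a fixed search order `σ` with the true class `i` at position `m`
(`σ m = i`), tail sums `S t = Σ_{s ≥ t} p (σ s)` and conditional hazards
`h t = p (σ t) / S t`, the integrated stepwise regrets under the Haldane measure
`dc/(c(1-c))` — `J t = ∫_0^{h t} c · dc/(c(1-c))` at each false step `t < m` and
`J m = ∫_{h m}^1 (1-c) · dc/(c(1-c))` at the true step — sum to `-ln (p i)`. -/
theorem cost_amnesia_fixed_order (K : ℕ) (hK : 2 ≤ K) (p : Fin K → ℝ)
    (hp : ∀ k, 0 < p k) (hps : ∑ k, p k = 1)
    (σ : Equiv.Perm (Fin K)) (i m : Fin K) (hm : σ m = i)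
    (S h : Fin K → ℝ)
    (hS : ∀ t, S t = ∑ s ∈ Finset.Ici t, p (σ s))
    (hh : ∀ t, h t = p (σ t) / S t) :
    (∫ c in (h m)..1, (1 - c) * (1 / (c * (1 - c))))
      + ∑ t ∈ Finset.Iio m, ∫ c in (0 : ℝ)..(h t), c * (1 / (c * (1 - c)))
      = -Real.log (p i) := by
  -- tail sums indexed by ℕ
  set A : ℕ → ℝ := fun n => ∑ s ∈ Finset.univ.filter (fun s : Fin K => n ≤ (s : ℕ)), p (σ s)
    with hA
  have hA0 : A 0 = 1 := by
    simp only [hA]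
    rw [Finset.filter_true_of_mem (fun s _ => Nat.zero_le _), ← hps]
    exact Equiv.sum_comp σ p
  have hSA : ∀ t : Fin K, S t = A t.val := by
    intro t
    rw [hS]
    apply Finset.sum_congr _ (fun _ _ => rfl)
    ext s
    simp only [Finset.mem_Ici, Finset.mem_filter, Finset.mem_univ, true_and, Fin.le_def]
  have hApos : ∀ n, n < K → 0 < A n := by
    intro n hn
    apply Finset.sum_pos' (fun s _ => (hp _).le)
    exact ⟨⟨n, hn⟩, by simp, hp _⟩
  have hAstep : ∀ n (hn : n < K), A n = p (σ ⟨n, hn⟩) + A (n + 1) := by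
    intro n hn
    have : (Finset.univ.filter fun s : Fin K => n ≤ (s : ℕ))
        = insert (⟨n, hn⟩ : Fin K) (Finset.univ.filter fun s : Fin K => n + 1 ≤ (s : ℕ)) := by
      ext s
      simp only [Finset.mem_filter, Finset.mem_univ, true_and, Finset.mem_insert]
      constructor
      · intro hle
        rcases eq_or_lt_of_le hle with he | hlt
        · left; exact (Fin.ext he.symm)
        · right; exact hlt
      · rintro (rfl | hlt)
        · rfl
        · omega
    rw [hA]
    simp only
    rw [this, Finset.sum_insert (by simp)]
  have hSpos : ∀ t : Fin K, 0 < S t := fun t => (hSA t) ▸ hApos t.val t.isLt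
  -- the true-step integral
  have hmS : p (σ m) ≤ S m := by
    rw [hSA m, hAstep m.val m.isLt]
    have : 0 ≤ A (m.val + 1) := by
      rcases lt_or_ge (m.val + 1) K with hk | hk
      · exact (hApos _ hk).le
      · have : (Finset.univ.filter fun s : Fin K => m.val + 1 ≤ (s : ℕ)) = ∅ := by
          ext s; simp only [Finset.mem_filter, Finset.mem_univ, true_and,
            Finset.notMem_empty, iff_false]
          omega
        simp only [hA, Fin.eta] at this ⊢
        rw [this, Finset.sum_empty]
      -- gives 0 ≤ A (m+1)
    linarith
  have hhm0 : 0 < h m := by rw [hh]; exact div_pos (hp _) (hSpos m)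
  have hhm1 : h m ≤ 1 := by rw [hh]; exact div_le_one_of_le₀ hmS (hSpos m).le
  have htrue : (∫ c in (h m)..1, (1 - c) * (1 / (c * (1 - c)))) = -Real.log (h m) := by
    have e1 : (∫ c in (h m)..1, (1 - c) * (1 / (c * (1 - c)))) = ∫ c in (h m)..1, 1 / c := by
      rw [intervalIntegral.integral_of_le hhm1, intervalIntegral.integral_of_le hhm1,
        MeasureTheory.integral_Ioc_eq_integral_Ioo, MeasureTheory.integral_Ioc_eq_integral_Ioo]
      apply MeasureTheory.setIntegral_congr_fun measurableSet_Ioo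
      intro c hc
      have hc0 : c ≠ 0 := ne_of_gt (lt_trans hhm0 hc.1)
      have hc1 : (1 : ℝ) - c ≠ 0 := by have := hc.2; intro hcon; linarith [sub_eq_zero.mp hcon]
      field_simp
    rw [e1, integral_one_div (by
      intro hcon
      rcases Set.mem_uIcc.mp hcon with ⟨h1, _⟩ | ⟨_, h2⟩
      · linarith
      · linarith)]
    rw [Real.log_div one_ne_zero (ne_of_gt hhm0), Real.log_one]
    ring
  -- each false-step integral
  have hfalse : ∀ t : Fin K, t < m →
      (∫ c in (0 : ℝ)..(h t), c * (1 / (c * (1 - c))))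
        = Real.log (A t.val) - Real.log (A (t.val + 1)) := by
    intro t htm
    have ht1K : t.val + 1 < K := lt_of_le_of_lt (Nat.succ_le_of_lt htm) m.isLt
    have hAt : 0 < A t.val := hApos _ t.isLt
    have hAt1 : 0 < A (t.val + 1) := hApos _ ht1K
    have hSt : S t = p (σ t) + A (t.val + 1) := by
      rw [hSA t, hAstep t.val t.isLt]
    have hht0 : 0 < h t := by rw [hh]; exact div_pos (hp _) (hSpos t)
    have hht1 : h t < 1 := by
      rw [hh, div_lt_one (hSpos t), hSt]
      linarith
    have key : A t.val = p (σ t) + A (t.val + 1) := by rw [← hSA t]; exact hSt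
    have homh : 1 - h t = A (t.val + 1) / A t.val := by
      rw [hh, hSA t]
      field_simp
      linarith
    have e1 : (∫ c in (0 : ℝ)..(h t), c * (1 / (c * (1 - c))))
        = ∫ c in (0 : ℝ)..(h t), 1 / (1 - c) := by
      rw [intervalIntegral.integral_of_le hht0.le, intervalIntegral.integral_of_le hht0.le]
      apply MeasureTheory.setIntegral_congr_fun measurableSet_Ioc
      intro c hc
      have hc0 : c ≠ 0 := ne_of_gt hc.1
      have hc1 : (1 : ℝ) - c ≠ 0 := by
        have : c < 1 := lt_of_le_of_lt hc.2 hht1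
        intro hcon; linarith [sub_eq_zero.mp hcon]
      field_simp
    have e2 : (∫ c in (0 : ℝ)..(h t), 1 / (1 - c))
        = ∫ c in (1 - h t)..(1 : ℝ), 1 / c := by
      have := intervalIntegral.integral_comp_sub_left (a := 0) (b := h t)
        (fun x => 1 / x) 1
      simpa using this
    rw [e1, e2, integral_one_div (by
      intro hcon
      have h1 : 0 < 1 - h t := by linarith
      rcases Set.mem_uIcc.mp hcon with ⟨hl, _⟩ | ⟨_, hr⟩
      · linarith
      · linarith)]
    rw [homh, one_div_div, Real.log_div (ne_of_gt hAt) (ne_of_gt hAt1)]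
  -- telescoping
  have hsum : ∑ t ∈ Finset.Iio m, (∫ c in (0 : ℝ)..(h t), c * (1 / (c * (1 - c))))
      = ∑ n ∈ Finset.range m.val,
          (Real.log (A n) - Real.log (A (n + 1))) := by
    exact Finset.sum_bij' (fun (t : Fin K) _ => t.val)
      (fun n hn => (⟨n, lt_trans (Finset.mem_range.mp hn) m.isLt⟩ : Fin K))
      (fun t ht => Finset.mem_range.mpr (Fin.lt_def.mp (Finset.mem_Iio.mp ht)))
      (fun n hn => Finset.mem_Iio.mpr (Fin.lt_def.mpr (Finset.mem_range.mp hn)))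
      (fun t ht => rfl) (fun n hn => rfl)
      (fun t ht => hfalse t (Finset.mem_Iio.mp ht))
  rw [htrue, hsum, Finset.sum_range_sub' (fun n => Real.log (A n)) m.val, hA0, Real.log_one]
  have : -Real.log (h m) = Real.log (A m.val) - Real.log (p i) := by
    rw [hh, hSA m, ← hm, Real.log_div (ne_of_gt (hp _)) (ne_of_gt (hApos _ m.isLt))]
    ring
  rw [this]
  ring
end
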